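/- arXiv:2601.13712 — 3 statements merged into one kernel-verified Lean document; each statement's English description precedes it below -/
import Mathlib

section
/- Optimality of the SVD truncation: let S ∈ ℝ^{N×M} with singular value decomposition S = UΣZᵀ, singular values σ₁ ≥ σ₂ ≥ … ≥ 0, and columns s₁,…,s_M. For any N' ≤ min(N,M), the subspace V spanned by the first N' left singular vectors satisfies ∑_{i=1}^{M} ‖s_i − P_V(s_i)‖² = min over all subspaces W of dimension ≤ N' of ∑_{i=1}^M ‖s_i − P_W(s_i)‖² = ∑_{k>N'} σ_k², where P_V denotes orthogonal projection onto V. -/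
/-!
Write the columns of `S = U Σ Zᵀ` in the orthonormal basis `uₖ` of columns of `U`:
`sᵢ = ∑ₖ (Σ Zᵀ)ₖᵢ uₖ`. The rows of `Σ Zᵀ` are orthogonal with squared norms `σₖ²`, so the
residual `∑ᵢ ‖sᵢ - P_W sᵢ‖²` equals `∑ₖ σₖ² ‖uₖ - P_W uₖ‖² = ∑ₖ σₖ² (1 - tₖ)` with
`tₖ = ‖P_W uₖ‖² ∈ [0, 1]` and `∑ₖ tₖ = tr P_W = dim W ≤ N'`. Since `σₖ²` is nonincreasing,
`∑ₖ σₖ² tₖ` is largest when `t` is the indicator of the first `N'` indices, which is what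
`W = V` achieves.
-/

open Matrix

/-- The `i`-th column of a matrix viewed as a vector of the Euclidean space. -/
noncomputable def matCol {N M : ℕ} (S : Matrix (Fin N) (Fin M) ℝ) (i : Fin M) :
    EuclideanSpace ℝ (Fin N) :=
  (WithLp.equiv 2 (Fin N → ℝ)).symm (fun j => S j i)

open Finset Module
open scoped RealInnerProductSpace

/-- The bathtub principle. -/
theorem Finset.sum_mul_le_sum_of_le_one {ι : Type*} [Fintype ι] [DecidableEq ι] {a t : ι → ℝ}
    {s : Finset ι} {c : ℝ} (hc : 0 ≤ c) (has : ∀ i ∈ s, c ≤ a i) (hasc : ∀ i ∉ s, a i ≤ c)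
    (ht₀ : ∀ i, 0 ≤ t i) (ht₁ : ∀ i, t i ≤ 1) (hsum : ∑ i, t i ≤ #s) :
    ∑ i, a i * t i ≤ ∑ i ∈ s, a i := by
  have hterm : ∀ i, (a i - c) * t i ≤ if i ∈ s then a i - c else 0 := fun i => by
    split_ifs with hi
    · nlinarith [has i hi, ht₁ i]
    · nlinarith [hasc i hi, ht₀ i]
  calc ∑ i, a i * t i = ∑ i, (a i - c) * t i + c * ∑ i, t i := by
        rw [mul_sum, ← sum_add_distrib]; congr 1; ext i; ring
    _ ≤ ∑ i ∈ s, (a i - c) + c * #s := by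
        gcongr
        exact (sum_le_sum fun i _ => hterm i).trans_eq (by rw [sum_ite_mem, univ_inter])
    _ = ∑ i ∈ s, a i := by rw [sum_sub_distrib]; simp only [sum_const, nsmul_eq_mul]; ring

theorem sum_norm_sq_sum_smul_of_mul_transpose_eq_diagonal {ι κ E : Type*} [Fintype ι]
    [Fintype κ] [DecidableEq κ] [NormedAddCommGroup E] [InnerProductSpace ℝ E] (x : κ → E)
    {D : Matrix κ ι ℝ} {a : κ → ℝ} (hD : D * Dᵀ = diagonal a) :
    ∑ i, ‖∑ k, D k i • x k‖ ^ 2 = ∑ k, a k * ‖x k‖ ^ 2 := by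
  have hDD : ∀ k l, ∑ i, D k i * D l i = diagonal a k l := fun k l => by
    rw [← hD, mul_apply]; rfl
  simp_rw [← real_inner_self_eq_norm_sq, sum_inner, inner_sum, real_inner_smul_left,
    real_inner_smul_right]
  rw [sum_comm]
  refine sum_congr rfl fun k _ => ?_
  rw [sum_comm]
  simp_rw [← mul_assoc, ← sum_mul, hDD, diagonal_apply, ite_mul, zero_mul, sum_ite_eq, mem_univ,
    if_true]

section WeightedResidual

variable {ι E : Type*} [NormedAddCommGroup E] [InnerProductSpace ℝ E]

theorem sum_norm_sq_sub_starProjection_of_mul_transpose_eq_diagonal [Fintype ι] {κ : Type*}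
    [Fintype κ] [DecidableEq κ] (x : κ → E) {D : Matrix κ ι ℝ} {a : κ → ℝ}
    (hD : D * Dᵀ = diagonal a) (W : Submodule ℝ E) [W.HasOrthogonalProjection] :
    ∑ i, ‖∑ k, D k i • x k - W.starProjection (∑ k, D k i • x k)‖ ^ 2 =
      ∑ k, a k * ‖x k - W.starProjection (x k)‖ ^ 2 := by
  simp_rw [← Submodule.starProjection_orthogonal_val, map_sum, map_smul]
  exact sum_norm_sq_sum_smul_of_mul_transpose_eq_diagonal _ hD

theorem Orthonormal.starProjection_span_image {u : ι → E} (hu : Orthonormal ℝ u) (s : Set ι)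
    [(Submodule.span ℝ (u '' s)).HasOrthogonalProjection] (k : ι) [Decidable (k ∈ s)] :
    (Submodule.span ℝ (u '' s)).starProjection (u k) = if k ∈ s then u k else 0 := by
  split_ifs with hk
  · exact Submodule.starProjection_eq_self_iff.mpr (Submodule.subset_span ⟨k, hk, rfl⟩)
  · refine (Submodule.starProjection_apply_eq_zero_iff _).mpr ?_
    have : Submodule.span ℝ {u k} ⟂ Submodule.span ℝ (u '' s) := by
      rw [Submodule.isOrtho_span]
      rintro _ rfl _ ⟨l, hl, rfl⟩
      exact hu.2 (ne_of_mem_of_not_mem hl hk).symm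
    exact this.le (Submodule.mem_span_singleton_self _)

theorem Orthonormal.sum_mul_norm_sq_sub_starProjection_span_image [Fintype ι] [DecidableEq ι]
    {u : ι → E} (hu : Orthonormal ℝ u) (a : ι → ℝ) (s : Finset ι)
    [(Submodule.span ℝ (u '' s)).HasOrthogonalProjection] :
    ∑ k, a k * ‖u k - (Submodule.span ℝ (u '' s)).starProjection (u k)‖ ^ 2 = ∑ k ∈ sᶜ, a k := by
  simp_rw [hu.starProjection_span_image, mem_coe]
  rw [← sum_add_sum_compl s, sum_eq_zero fun i hi => by simp [hi], zero_add]
  refine sum_congr rfl fun i hi => ?_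
  simp [mem_compl.mp hi, hu.1 i]

variable [Fintype ι] [FiniteDimensional ℝ E]

theorem OrthonormalBasis.sum_norm_sq_starProjection (b : OrthonormalBasis ι ℝ E)
    (W : Submodule ℝ E) : ∑ i, ‖W.starProjection (b i)‖ ^ 2 = finrank ℝ W := by
  have hproj : LinearMap.IsProj W (W.starProjection : E →ₗ[ℝ] E) :=
    ⟨fun x => (W.orthogonalProjectionOnto x).2, fun _ => Submodule.starProjection_eq_self_iff.mpr⟩
  rw [← hproj.trace, LinearMap.trace_eq_sum_inner _ b]
  refine sum_congr rfl fun i _ => ?_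
  rw [real_inner_comm]
  exact (W.re_inner_starProjection_eq_normSq (b i)).symm

/-- Ky Fan's maximum principle, in residual form. -/
theorem OrthonormalBasis.sum_compl_le_sum_mul_norm_sq_sub_starProjection [DecidableEq ι]
    (b : OrthonormalBasis ι ℝ E) {a : ι → ℝ} {s : Finset ι} {c : ℝ} (hc : 0 ≤ c)
    (has : ∀ i ∈ s, c ≤ a i) (hasc : ∀ i ∉ s, a i ≤ c) (W : Submodule ℝ E)
    (hW : finrank ℝ W ≤ #s) :
    ∑ i ∈ sᶜ, a i ≤ ∑ i, a i * ‖b i - W.starProjection (b i)‖ ^ 2 := by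
  have hres : ∀ i, ‖b i - W.starProjection (b i)‖ ^ 2 = 1 - ‖W.starProjection (b i)‖ ^ 2 := by
    intro i
    rw [← Submodule.starProjection_orthogonal_val, eq_sub_iff_add_eq', ← b.orthonormal.1 i,
      ← W.norm_sq_eq_add_norm_sq_starProjection, b.orthonormal.1 i, one_pow]
  have hbathtub := sum_mul_le_sum_of_le_one (t := fun i => ‖W.starProjection (b i)‖ ^ 2) hc has hasc
    (fun _ => sq_nonneg _)
    (fun i => by
      rw [← one_pow 2, ← b.orthonormal.1 i]
      gcongr
      exact W.norm_starProjection_apply_le (b i))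
    (by rw [b.sum_norm_sq_starProjection]; exact_mod_cast hW)
  simp_rw [hres, mul_sub, mul_one, sum_sub_distrib]
  linarith [sum_add_sum_compl s a]

theorem OrthonormalBasis.sum_compl_val_lt_le_sum_mul_norm_sq_sub_starProjection {n : ℕ}
    (b : OrthonormalBasis (Fin n) ℝ E) {a : ℕ → ℝ} (ha : Antitone a) {m : ℕ} (ham : 0 ≤ a m)
    (W : Submodule ℝ E) (hW : finrank ℝ W ≤ m) :
    ∑ k ∈ ({k : Fin n | (k : ℕ) < m} : Finset (Fin n))ᶜ, a k ≤
      ∑ k : Fin n, a k * ‖b k - W.starProjection (b k)‖ ^ 2 := by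
  refine b.sum_compl_le_sum_mul_norm_sq_sub_starProjection ham ?_ ?_ W ?_
  · intro k hk
    exact ha (by simpa using hk : (k : ℕ) < m).le
  · intro k hk
    exact ha (by simpa using hk : m ≤ k)
  · rw [Fin.card_filter_val_lt, le_min_iff]
    refine ⟨?_, hW⟩
    simpa [finrank_eq_card_basis b.toBasis] using W.finrank_le

end WeightedResidual

theorem matCol_mul {N K M : ℕ} (A : Matrix (Fin N) (Fin K) ℝ) (B : Matrix (Fin K) (Fin M) ℝ)
    (i : Fin M) : matCol (A * B) i = ∑ k, B k i • matCol A k := by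
  ext j
  simp [matCol, mul_apply, mul_comm]

theorem orthonormal_matCol {N : ℕ} {U : Matrix (Fin N) (Fin N) ℝ} (hU : Uᵀ * U = 1) :
    Orthonormal ℝ (matCol U) := by
  rw [orthonormal_iff_ite]
  intro k l
  rw [← one_apply, ← hU, mul_apply]
  simp [matCol, PiLp.inner_apply, mul_comm]

noncomputable def matColOrthonormalBasis {N : ℕ} (U : Matrix (Fin N) (Fin N) ℝ)
    (hU : Uᵀ * U = 1) : OrthonormalBasis (Fin N) ℝ (EuclideanSpace ℝ (Fin N)) :=
  .mk (orthonormal_matCol hU)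
    ((orthonormal_matCol hU).linearIndependent.span_eq_top_of_card_eq_finrank' (by simp)).ge

@[simp]
theorem coe_matColOrthonormalBasis {N : ℕ} (U : Matrix (Fin N) (Fin N) ℝ) (hU : Uᵀ * U = 1) :
    ⇑(matColOrthonormalBasis U hU) = matCol U :=
  OrthonormalBasis.coe_mk _ _

def rectDiag (N M : ℕ) (σ : ℕ → ℝ) : Matrix (Fin N) (Fin M) ℝ :=
  of fun i j => if (i : ℕ) = j then σ i else 0

theorem rectDiag_mul_transpose (N M : ℕ) (σ : ℕ → ℝ) :
    rectDiag N M σ * (rectDiag N M σ)ᵀ =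
      diagonal fun k : Fin N => if (k : ℕ) < M then σ k ^ 2 else 0 := by
  refine Matrix.ext fun k l => ?_
  rw [mul_apply, diagonal_apply]
  split_ifs with hkl hkM
  · subst hkl
    rw [sum_eq_single ⟨k, hkM⟩] <;> simp +contextual [rectDiag, sq, Fin.ext_iff, eq_comm]
  all_goals
    refine sum_eq_zero fun j _ => ?_
    simp only [rectDiag, of_apply, transpose_apply]
    split_ifs <;> first | omega | ring

theorem antitone_ite_lt_sq {σ : ℕ → ℝ} (hσ₀ : ∀ k, 0 ≤ σ k) (hσ : Antitone σ) (M : ℕ) :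
    Antitone fun k => if k < M then σ k ^ 2 else 0 := by
  intro k l hkl
  dsimp only
  split_ifs with hl hk hk
  · exact pow_le_pow_left₀ (hσ₀ l) (hσ hkl) 2
  · omega
  · positivity
  · rfl

theorem sum_norm_sq_matCol_sub_starProjection {N M : ℕ} (U : Matrix (Fin N) (Fin N) ℝ)
    {Z : Matrix (Fin M) (Fin M) ℝ} (hZ : Zᵀ * Z = 1) (σ : ℕ → ℝ)
    (W : Submodule ℝ (EuclideanSpace ℝ (Fin N))) :
    ∑ i, ‖matCol (U * rectDiag N M σ * Zᵀ) i -
        W.starProjection (matCol (U * rectDiag N M σ * Zᵀ) i)‖ ^ 2 =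
      ∑ k : Fin N, (if (k : ℕ) < M then σ k ^ 2 else 0) *
        ‖matCol U k - W.starProjection (matCol U k)‖ ^ 2 := by
  have hD : rectDiag N M σ * Zᵀ * (rectDiag N M σ * Zᵀ)ᵀ =
      diagonal fun k : Fin N => if (k : ℕ) < M then σ k ^ 2 else 0 := by
    rw [transpose_mul, transpose_transpose, Matrix.mul_assoc, ← Matrix.mul_assoc Zᵀ, hZ,
      Matrix.one_mul, rectDiag_mul_transpose]
  simp_rw [Matrix.mul_assoc U, matCol_mul U]
  exact sum_norm_sq_sub_starProjection_of_mul_transpose_eq_diagonal _ hD W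

theorem Fin.sum_compl_filter_val_lt_ite_eq_sum_Ico {R : Type*} [AddCommMonoid R] (N M N' : ℕ)
    (f : ℕ → R) :
    ∑ k ∈ ({k : Fin N | (k : ℕ) < N'} : Finset (Fin N))ᶜ, (if (k : ℕ) < M then f k else 0) =
      ∑ k ∈ Ico N' (min N M), f k := by
  rw [← sum_filter]
  refine (sum_map _ Fin.valEmbedding f).symm.trans ?_
  congr 1
  ext n
  simp only [mem_map, mem_filter, mem_compl, mem_Ico, Fin.valEmbedding_apply, lt_min_iff]
  constructor
  · rintro ⟨k, ⟨hk, hkM⟩, rfl⟩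
    simp only [mem_univ, true_and, not_lt] at hk
    omega
  · rintro ⟨hn, hnN, hnM⟩
    exact ⟨⟨n, hnN⟩, by simpa using ⟨hn, hnM⟩, rfl⟩

/-- Optimality of the SVD truncation (Eckart–Young, column form): if `S = U Σ Zᵀ` with
`U, Z` orthogonal and `Σ` the rectangular diagonal matrix of nonincreasing nonnegative
singular values `σ`, then for `N' ≤ min N M` the span `V` of the first `N'` left singular
vectors minimizes `∑ᵢ ‖sᵢ − P_W sᵢ‖²` over all subspaces `W` of dimension `≤ N'`, with
minimum value `∑_{k ≥ N'} σ_k²`. -/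
theorem eckart_young_columns {N M : ℕ}
    (S : Matrix (Fin N) (Fin M) ℝ)
    (U : Matrix (Fin N) (Fin N) ℝ) (Z : Matrix (Fin M) (Fin M) ℝ)
    (σ : ℕ → ℝ)
    (hU : Uᵀ * U = 1 ∧ U * Uᵀ = 1) (hZ : Zᵀ * Z = 1 ∧ Z * Zᵀ = 1)
    (hσ_nonneg : ∀ k, 0 ≤ σ k) (hσ_mono : ∀ k, σ (k + 1) ≤ σ k)
    (hSVD : S = U * (Matrix.of fun (i : Fin N) (j : Fin M) =>
      if (i : ℕ) = (j : ℕ) then σ i else 0) * Zᵀ)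
    (N' : ℕ) (hN' : N' ≤ min N M)
    (V : Submodule ℝ (EuclideanSpace ℝ (Fin N)))
    (hV : V = Submodule.span ℝ
      (Set.range fun k : Fin N' => matCol U (Fin.castLE (le_trans hN' (min_le_left _ _)) k))) :
    (∀ W : Submodule ℝ (EuclideanSpace ℝ (Fin N)), Module.finrank ℝ W ≤ N' →
      ∑ i : Fin M, ‖matCol S i - (Submodule.orthogonalProjectionOnto V (matCol S i) : EuclideanSpace ℝ (Fin N))‖ ^ 2
        ≤ ∑ i : Fin M, ‖matCol S i - (Submodule.orthogonalProjectionOnto W (matCol S i) : EuclideanSpace ℝ (Fin N))‖ ^ 2) ∧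
    ∑ i : Fin M, ‖matCol S i - (Submodule.orthogonalProjectionOnto V (matCol S i) : EuclideanSpace ℝ (Fin N))‖ ^ 2
      = ∑ k ∈ Finset.Ico N' (min N M), σ k ^ 2 := by
  obtain rfl : S = U * rectDiag N M σ * Zᵀ := hSVD
  set s : Finset (Fin N) := {k | (k : ℕ) < N'}
  have hVs : V = Submodule.span ℝ (matCol U '' s) := by
    rw [hV, Set.range_comp', Fin.range_castLE, coe_filter]
    simp
  have hVres := (orthonormal_matCol hU.1).sum_mul_norm_sq_sub_starProjection_span_image
    (fun k => if (k : ℕ) < M then σ k ^ 2 else 0) s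
  rw [← hVs] at hVres
  simp_rw [← Submodule.starProjection_apply, sum_norm_sq_matCol_sub_starProjection U hZ.1, hVres]
  refine ⟨fun W hW => ?_, Fin.sum_compl_filter_val_lt_ite_eq_sum_Ico N M N' (σ · ^ 2)⟩
  have hσ_sq := antitone_ite_lt_sq hσ_nonneg (antitone_nat_of_succ_le hσ_mono) M
  have hkyFan := OrthonormalBasis.sum_compl_val_lt_le_sum_mul_norm_sq_sub_starProjection
    (matColOrthonormalBasis U hU.1) hσ_sq (by positivity) W hW
  rwa [coe_matColOrthonormalBasis] at hkyFan
end

section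
/- Orthogonal Procrustes problem: given U, V ∈ ℝ^{n×p} and the SVD UᵀV = P D Qᵀ with P, Q ∈ O(p) and D diagonal nonnegative, the orthogonal matrix O* = P Qᵀ minimizes ‖V − U O‖_F over O ∈ O(p), and the minimum value satisfies ‖V − U O*‖_F² = ‖U‖_F² + ‖V‖_F² − 2 tr(D). -/
open Matrix

/-- Frobenius norm of a real matrix. -/
noncomputable def frob {n m : ℕ} (M : Matrix (Fin n) (Fin m) ℝ) : ℝ :=
  Real.sqrt (∑ i, ∑ j, (M i j) ^ 2)

lemma sum_sq_eq_trace {n m : ℕ} (M : Matrix (Fin n) (Fin m) ℝ) :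
    (∑ i, ∑ j, (M i j) ^ 2) = (Mᵀ * M).trace := by
  simp only [Matrix.trace, Matrix.mul_apply, Matrix.diag, Matrix.transpose_apply, sq]
  exact Finset.sum_comm

lemma frob_sq {n m : ℕ} (M : Matrix (Fin n) (Fin m) ℝ) :
    frob M ^ 2 = (Mᵀ * M).trace := by
  rw [frob, Real.sq_sqrt (by positivity), sum_sq_eq_trace]

lemma key_expand {n p : ℕ} (U V : Matrix (Fin n) (Fin p) ℝ)
    (O : Matrix (Fin p) (Fin p) ℝ) (hO : O * Oᵀ = 1) :
    frob (V - U * O) ^ 2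
      = frob U ^ 2 + frob V ^ 2 - 2 * (Oᵀ * (Uᵀ * V)).trace := by
  rw [frob_sq, frob_sq, frob_sq]
  have h1 : (V - U * O)ᵀ * (V - U * O)
      = Vᵀ * V - Vᵀ * (U * O) - Oᵀ * Uᵀ * V + Oᵀ * Uᵀ * (U * O) := by
    simp only [Matrix.transpose_sub, Matrix.transpose_mul, Matrix.sub_mul, Matrix.mul_sub]
    noncomm_ring
  rw [h1]
  have h2 : (Vᵀ * (U * O)).trace = (Oᵀ * (Uᵀ * V)).trace := by
    rw [← Matrix.trace_transpose (Vᵀ * (U * O))]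
    simp [Matrix.transpose_mul, Matrix.mul_assoc]
  have h3 : (Oᵀ * Uᵀ * V).trace = (Oᵀ * (Uᵀ * V)).trace := by rw [Matrix.mul_assoc]
  have h4 : (Oᵀ * Uᵀ * (U * O)).trace = (Uᵀ * U).trace := by
    rw [Matrix.trace_mul_comm, ← Matrix.mul_assoc, Matrix.mul_assoc U O Oᵀ,
      hO, Matrix.mul_one, Matrix.trace_mul_comm]
  rw [Matrix.trace_add, Matrix.trace_sub, Matrix.trace_sub, h2, h3, h4]
  ring

lemma trace_mul_diag_le {p : ℕ} (R D : Matrix (Fin p) (Fin p) ℝ)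
    (hR : Rᵀ * R = 1) (hD : D.IsDiag) (hDnonneg : ∀ i, 0 ≤ D i i) :
    (R * D).trace ≤ D.trace := by
  have hdiag : ∀ i, (R * D) i i = R i i * D i i := by
    intro i
    rw [Matrix.mul_apply]
    rw [Finset.sum_eq_single i]
    · intro b _ hb; rw [hD hb, mul_zero]
    · intro h; exact absurd (Finset.mem_univ i) h
  have hcol : ∀ i, R i i ≤ 1 := by
    intro i
    have h := congrFun (congrFun hR i) i
    simp only [Matrix.mul_apply, Matrix.transpose_apply, Matrix.one_apply_eq] at h
    have hle : R i i ^ 2 ≤ 1 := by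
      rw [← h]
      have : ∀ k ∈ Finset.univ, (0:ℝ) ≤ R k i * R k i := fun k _ => mul_self_nonneg _
      calc R i i ^ 2 = R i i * R i i := sq _
        _ ≤ ∑ k, R k i * R k i := Finset.single_le_sum this (Finset.mem_univ i)
    nlinarith [sq_nonneg (R i i - 1)]
  simp only [Matrix.trace, Matrix.diag]
  apply Finset.sum_le_sum
  intro i _
  rw [hdiag i]
  nlinarith [hDnonneg i, hcol i]

/-- Orthogonal Procrustes: given the SVD `Uᵀ V = P D Qᵀ` with `P, Q` orthogonal and `D`
diagonal nonnegative, `O* = P Qᵀ` minimizes `‖V − U O‖_F` over orthogonal `O`, and the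
minimum satisfies `‖V − U O*‖_F² = ‖U‖_F² + ‖V‖_F² − 2 tr D`. -/
theorem orthogonal_procrustes {n p : ℕ}
    (U V : Matrix (Fin n) (Fin p) ℝ)
    (P Q D : Matrix (Fin p) (Fin p) ℝ)
    (hP : Pᵀ * P = 1 ∧ P * Pᵀ = 1) (hQ : Qᵀ * Q = 1 ∧ Q * Qᵀ = 1)
    (hD : D.IsDiag) (hDnonneg : ∀ i, 0 ≤ D i i)
    (hSVD : Uᵀ * V = P * D * Qᵀ) :
    (∀ O : Matrix (Fin p) (Fin p) ℝ, Oᵀ * O = 1 → O * Oᵀ = 1 →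
      frob (V - U * (P * Qᵀ)) ≤ frob (V - U * O)) ∧
    frob (V - U * (P * Qᵀ)) ^ 2 = frob U ^ 2 + frob V ^ 2 - 2 * D.trace := by
  have hOstar1 : (P * Qᵀ)ᵀ * (P * Qᵀ) = 1 := by
    rw [Matrix.transpose_mul, Matrix.transpose_transpose]
    calc Qᵀᵀ * Pᵀ * (P * Qᵀ) = Q * (Pᵀ * P) * Qᵀ := by
          rw [Matrix.transpose_transpose]; noncomm_ring
      _ = 1 := by rw [hP.1, Matrix.mul_one, hQ.2]
  have hOstar2 : (P * Qᵀ) * (P * Qᵀ)ᵀ = 1 := by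
    rw [Matrix.transpose_mul, Matrix.transpose_transpose]
    calc P * Qᵀ * (Q * Pᵀ) = P * (Qᵀ * Q) * Pᵀ := by noncomm_ring
      _ = 1 := by rw [hQ.1, Matrix.mul_one, hP.2]
  have hstar : ((P * Qᵀ)ᵀ * (Uᵀ * V)).trace = D.trace := by
    rw [hSVD, Matrix.transpose_mul, Matrix.transpose_transpose]
    have : Q * Pᵀ * (P * D * Qᵀ) = Q * D * Qᵀ := by
      calc Q * Pᵀ * (P * D * Qᵀ) = Q * (Pᵀ * P) * D * Qᵀ := by noncomm_ring
        _ = Q * D * Qᵀ := by rw [hP.1, Matrix.mul_one]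
    rw [this, Matrix.trace_mul_comm, ← Matrix.mul_assoc, hQ.1, Matrix.one_mul]
  have hvalstar : frob (V - U * (P * Qᵀ)) ^ 2
      = frob U ^ 2 + frob V ^ 2 - 2 * D.trace := by
    rw [key_expand U V _ hOstar2, hstar]
  refine ⟨?_, hvalstar⟩
  intro O hO1 hO2
  have hexp := key_expand U V O hO2
  have htr : (Oᵀ * (Uᵀ * V)).trace ≤ D.trace := by
    rw [hSVD]
    have : Oᵀ * (P * D * Qᵀ) = Oᵀ * P * D * Qᵀ := by noncomm_ring
    rw [this, Matrix.trace_mul_comm, ← Matrix.mul_assoc]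
    apply trace_mul_diag_le _ _ _ hD hDnonneg
    calc (Qᵀ * (Oᵀ * P))ᵀ * (Qᵀ * (Oᵀ * P)) = Pᵀ * (O * (Q * Qᵀ) * Oᵀ) * P := by
          simp only [Matrix.transpose_mul, Matrix.transpose_transpose]; noncomm_ring
      _ = 1 := by rw [hQ.2, Matrix.mul_one, hO2, Matrix.mul_one, hP.1]
  have hsq : frob (V - U * (P * Qᵀ)) ^ 2 ≤ frob (V - U * O) ^ 2 := by
    rw [hvalstar, hexp]; linarith
  have h1 : 0 ≤ frob (V - U * O) := Real.sqrt_nonneg _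
  nlinarith [Real.sqrt_nonneg (∑ i, ∑ j, ((V - U * (P * Qᵀ)) i j) ^ 2)]
end

section
/- If U and V are n×p matrices with orthonormal columns such that the Frobenius norm of sin Θ(range U, range V) is at most ε, then there exists an orthogonal matrix O ∈ O(p) (the Procrustes alignment) with ‖V − U O‖_F ≤ √2 · ε, where Θ denotes the vector of principal angles between the column spaces. -/
open Matrix Real

/-- If `U, V` have orthonormal columns and the principal angles `θᵢ` between their column
spaces (i.e. `cos θᵢ` are the singular values of `Uᵀ V`) satisfy
`‖sin Θ‖_F = √(∑ sin² θᵢ) ≤ ε`, then there is an orthogonal `O ∈ O(p)` with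
`‖V − U O‖_F ≤ √2 · ε`. -/
theorem procrustes_alignment_of_sin_theta_bound {n p : ℕ}
    (U V : Matrix (Fin n) (Fin p) ℝ)
    (hU : Uᵀ * U = 1) (hV : Vᵀ * V = 1)
    (θ : Fin p → ℝ) (hθ : ∀ i, θ i ∈ Set.Icc (0 : ℝ) (π / 2))
    (P Q : Matrix (Fin p) (Fin p) ℝ)
    (hP : Pᵀ * P = 1 ∧ P * Pᵀ = 1) (hQ : Qᵀ * Q = 1 ∧ Q * Qᵀ = 1)
    (hSVD : Uᵀ * V = P * Matrix.diagonal (fun i => Real.cos (θ i)) * Qᵀ)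
    (ε : ℝ) (hε : Real.sqrt (∑ i, Real.sin (θ i) ^ 2) ≤ ε) :
    ∃ O : Matrix (Fin p) (Fin p) ℝ, Oᵀ * O = 1 ∧ O * Oᵀ = 1 ∧
      frob (V - U * O) ≤ Real.sqrt 2 * ε := by
  set D : Matrix (Fin p) (Fin p) ℝ := Matrix.diagonal (fun i => Real.cos (θ i)) with hD
  refine ⟨P * Qᵀ, ?_, ?_, ?_⟩
  · rw [transpose_mul, transpose_transpose, Matrix.mul_assoc, ← Matrix.mul_assoc Pᵀ,
      hP.1, Matrix.one_mul, hQ.2]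
  · rw [transpose_mul, transpose_transpose, Matrix.mul_assoc, ← Matrix.mul_assoc Qᵀ,
      hQ.1, Matrix.one_mul, hP.2]
  · set O : Matrix (Fin p) (Fin p) ℝ := P * Qᵀ with hO
    have hε0 : 0 ≤ ε := le_trans (Real.sqrt_nonneg _) hε
    have hOO : Oᵀ * O = 1 := by
      rw [hO, transpose_mul, transpose_transpose, Matrix.mul_assoc, ← Matrix.mul_assoc Pᵀ,
        hP.1, Matrix.one_mul, hQ.2]
    -- trace of Oᵀ Uᵀ V
    have hcross : (Oᵀ * (Uᵀ * V)).trace = ∑ i, Real.cos (θ i) := by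
      have h1 : Oᵀ * (Uᵀ * V) = Q * (D * Qᵀ) := by
        rw [hSVD, hO, transpose_mul, transpose_transpose, Matrix.mul_assoc]
        rw [Matrix.mul_assoc P D Qᵀ, ← Matrix.mul_assoc Pᵀ, hP.1, Matrix.one_mul]
      rw [h1, Matrix.trace_mul_comm, Matrix.mul_assoc, hQ.1, Matrix.mul_one, hD,
        Matrix.trace_diagonal]
    -- expand the square
    have expand : (V - U * O)ᵀ * (V - U * O)
        = Vᵀ * V - Oᵀ * (Uᵀ * V) - (Oᵀ * (Uᵀ * V))ᵀ + Oᵀ * ((Uᵀ * U) * O) := by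
      rw [transpose_sub, transpose_mul]
      simp only [Matrix.sub_mul, Matrix.mul_sub, Matrix.mul_assoc, transpose_mul,
        transpose_transpose]
      abel
    have htr : ((V - U * O)ᵀ * (V - U * O)).trace
        = 2 * ∑ i, (1 - Real.cos (θ i)) := by
      rw [expand, Matrix.trace_add, Matrix.trace_sub, Matrix.trace_sub,
        Matrix.trace_transpose, hcross, hV, hU, Matrix.one_mul, hOO,
        Matrix.trace_one]
      simp [Finset.sum_sub_distrib]
      ring
    have hsum : ∑ i, ∑ j, ((V - U * O) i j) ^ 2
        = ((V - U * O)ᵀ * (V - U * O)).trace := by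
      rw [Matrix.trace]
      simp only [Matrix.diag_apply, Matrix.mul_apply, Matrix.transpose_apply, sq]
      exact Finset.sum_comm
    -- bound
    have hterm : ∀ i, 1 - Real.cos (θ i) ≤ Real.sin (θ i) ^ 2 := by
      intro i
      have hc0 : 0 ≤ Real.cos (θ i) :=
        Real.cos_nonneg_of_mem_Icc ⟨by linarith [(hθ i).1, Real.pi_pos], (hθ i).2⟩
      have hc1 : Real.cos (θ i) ≤ 1 := Real.cos_le_one _
      have : Real.sin (θ i) ^ 2 = 1 - Real.cos (θ i) ^ 2 := by
        have := Real.sin_sq_add_cos_sq (θ i); linarith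
      nlinarith
    have hsin : ∑ i, Real.sin (θ i) ^ 2 ≤ ε ^ 2 := by
      have h0 : 0 ≤ ∑ i, Real.sin (θ i) ^ 2 :=
        Finset.sum_nonneg fun i _ => sq_nonneg _
      calc ∑ i, Real.sin (θ i) ^ 2 = Real.sqrt (∑ i, Real.sin (θ i) ^ 2) ^ 2 := by
            rw [Real.sq_sqrt h0]
        _ ≤ ε ^ 2 := by nlinarith [Real.sqrt_nonneg (∑ i, Real.sin (θ i) ^ 2)]
    have hbound : ∑ i, ∑ j, ((V - U * O) i j) ^ 2 ≤ 2 * ε ^ 2 := by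
      rw [hsum, htr]
      have : ∑ i, (1 - Real.cos (θ i)) ≤ ∑ i, Real.sin (θ i) ^ 2 :=
        Finset.sum_le_sum fun i _ => hterm i
      linarith
    rw [frob]
    calc Real.sqrt (∑ i, ∑ j, ((V - U * O) i j) ^ 2)
        ≤ Real.sqrt (2 * ε ^ 2) := Real.sqrt_le_sqrt hbound
      _ = Real.sqrt 2 * ε := by
          rw [Real.sqrt_mul (by norm_num), Real.sqrt_sq hε0]
end
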